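/- arXiv:2204.02576 — 3 statements merged into one kernel-verified Lean document; each statement's English description precedes it below -/
import Mathlib

section
/- Let χ be a Dirichlet character modulo a positive integer r₁. For a complex number z, define the Euler factor g_p(z) = (1 − χ(p) p^{−z})(1 − χ(p)² p^{−2z})·(Σ_{α=0}^∞ a(p^α) χ(p^α) p^{−αz}) for each prime p. Then the Euler product G(z,χ) = ∏_p g_p(z) converges absolutely for Re z > 1/3, and for every z with Re z > 1 one has Σ_{n=1}^∞ a(n) χ(n) n^{−z} = L(z,χ)·L(2z,χ²)·G(z,χ), where L(·,χ) denotes the Dirichlet L-function of χ and χ² is the square of the character χ. -/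
open Finset

/-! ### Auxiliary lemmas on partitions -/

private lemma partCard_zero : Fintype.card (Nat.Partition 0) = 1 := Fintype.card_unique

private lemma partCard_one : Fintype.card (Nat.Partition 1) = 1 := Fintype.card_unique

private def part2a : Nat.Partition 2 := ⟨{2}, by intro i hi; simp at hi; omega, by decide⟩
private def part2b : Nat.Partition 2 := ⟨{1,1}, by intro i hi; simp at hi; omega, by decide⟩

private lemma partClassify2 (p : Nat.Partition 2) : p = part2a ∨ p = part2b := by
  have hsum := p.parts_sum
  have hpos := fun {i} => p.parts_pos (i := i)
  by_cases h2 : 2 ∈ p.parts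
  · left
    apply Nat.Partition.ext
    have he : 2 ::ₘ p.parts.erase 2 = p.parts := Multiset.cons_erase h2
    have hs0 : (p.parts.erase 2).sum = 0 := by
      have := congrArg Multiset.sum he
      rw [Multiset.sum_cons] at this
      omega
    have hz : p.parts.erase 2 = 0 := by
      rw [Multiset.eq_zero_iff_forall_notMem]
      intro a ha
      have h1 : 0 < a := hpos (Multiset.mem_of_mem_erase ha)
      have h2' : a ≤ (p.parts.erase 2).sum := Multiset.le_sum_of_mem ha
      omega
    rw [← he, hz]
    rfl
  · right
    apply Nat.Partition.ext
    have hall : ∀ b ∈ p.parts, b = 1 := by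
      intro b hb
      have h1 : 0 < b := hpos hb
      have h2' : b ≤ p.parts.sum := Multiset.le_sum_of_mem hb
      have : b ≠ 2 := fun h => h2 (h ▸ hb)
      omega
    have hrep : p.parts = Multiset.replicate (Multiset.card p.parts) 1 :=
      Multiset.eq_replicate.mpr ⟨rfl, hall⟩
    have hcard : Multiset.card p.parts = 2 := by
      have := congrArg Multiset.sum hrep
      rw [Multiset.sum_replicate, hsum, smul_eq_mul, mul_one] at this
      omega
    rw [hrep, hcard]
    rfl

private lemma part2ne : part2a ≠ part2b := by
  intro h
  have : ({2} : Multiset ℕ) = {1,1} := congrArg Nat.Partition.parts h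
  exact absurd this (by decide)

private lemma partCard_two : Fintype.card (Nat.Partition 2) = 2 := by
  have hpair : ({part2a, part2b} : Finset (Nat.Partition 2)).card = 2 := by
    rw [Finset.card_insert_of_notMem (by simp [part2ne]), Finset.card_singleton]
  have huniv : (Finset.univ : Finset (Nat.Partition 2)) = {part2a, part2b} := by
    apply Finset.eq_of_subset_of_card_le (by intro p _; rcases partClassify2 p with h | h <;> simp [h])
    rw [hpair]
    have := Finset.card_le_univ ({part2a, part2b} : Finset (Nat.Partition 2))
    rw [hpair] at this
    exact this
  rw [Fintype.card, huniv, hpair]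


/-- a * count a summation identity -/
private lemma multiset_sum_count (N : ℕ) (s : Multiset ℕ) (h : ∀ a ∈ s, a < N) :
    ∑ a ∈ range N, a * s.count a = s.sum := by
  induction s using Multiset.induction_on with
  | empty => simp
  | cons b s ih =>
    have hb : b ∈ range N := mem_range.mpr (h b (Multiset.mem_cons_self b s))
    have ihs := ih (fun a ha => h a (Multiset.mem_cons_of_mem ha))
    simp only [Multiset.count_cons, Multiset.sum_cons]
    rw [← ihs]
    rw [Finset.sum_congr rfl (fun a _ => by rw [Nat.mul_add] : ∀ a ∈ range N,
      a * (Multiset.count a s + if a = b then 1 else 0)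
        = a * Multiset.count a s + a * (if a = b then 1 else 0))]
    rw [Finset.sum_add_distrib]
    have : ∑ a ∈ range N, a * (if a = b then 1 else 0) = b := by
      rw [Finset.sum_eq_single b]
      · simp
      · intro a _ hab; simp [hab]
      · intro hb'; exact (hb' hb).elim
    omega

private lemma multiset_card_le_sum (s : Multiset ℕ) (h : ∀ a ∈ s, 0 < a) :
    Multiset.card s ≤ s.sum := by
  induction s using Multiset.induction_on with
  | empty => simp
  | cons b s ih =>
    have hb := h b (Multiset.mem_cons_self b s)
    have := ih (fun a ha => h a (Multiset.mem_cons_of_mem ha))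
    simp only [Multiset.card_cons, Multiset.sum_cons]
    omega

private lemma geom_partial_le {y : ℝ} (hy0 : 0 ≤ y) (hy1 : y < 1) (N : ℕ) :
    ∑ j ∈ range N, y ^ j ≤ (1 - y)⁻¹ := by
  rw [geom_sum_eq (by intro h; rw [h] at hy1; exact lt_irrefl 1 hy1) N]
  have h1 : y - 1 < 0 := by linarith
  rw [div_le_iff_of_neg h1]
  have h2 : (1 - y)⁻¹ * (y - 1) = -1 := by
    rw [show y - 1 = -(1-y) by ring, mul_neg, inv_mul_cancel₀ (by linarith : (1:ℝ) - y ≠ 0)]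
  have h3 : (0:ℝ) ≤ y ^ N := pow_nonneg hy0 N
  rw [h2]; linarith

private lemma inv_one_sub_le_exp {x y : ℝ} (hx1 : x < 1) (hy0 : 0 ≤ y) (hyx : y ≤ x) :
    (1 - y)⁻¹ ≤ Real.exp (y * (1 - x)⁻¹) := by
  have hx0 : 0 < 1 - x := by linarith
  have hy1 : 0 < 1 - y := by linarith
  have hd : (1 - x) * (1 - x)⁻¹ = 1 := mul_inv_cancel₀ (by linarith)
  have h5 : (1:ℝ) ≤ (1 - y) * (1 - x)⁻¹ := by
    calc (1:ℝ) = (1 - x) * (1 - x)⁻¹ := hd.symm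
      _ ≤ (1 - y) * (1 - x)⁻¹ := mul_le_mul_of_nonneg_right (by linarith) (inv_nonneg.mpr hx0.le)
  have h6 : y * 1 ≤ y * ((1 - y) * (1 - x)⁻¹) := mul_le_mul_of_nonneg_left h5 hy0
  have h7 : (1 - y)⁻¹ ≤ 1 + y * (1 - x)⁻¹ := by
    rw [inv_eq_one_div, div_le_iff₀ hy1]
    nlinarith
  exact h7.trans (by linarith [Real.add_one_le_exp (y * (1 - x)⁻¹)])

private lemma partitionGF_sum_le {x : ℝ} (hx0 : 0 ≤ x) (hx1 : x < 1) (N : ℕ) :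
    ∑ α ∈ range N, (Fintype.card (Nat.Partition α) : ℝ) * x ^ α
      ≤ Real.exp (x * (1 - x)⁻¹ * (1 - x)⁻¹) := by
  classical
  set g : (Fin N → ℕ) → ℝ := fun m => ∏ k : Fin N, (x ^ ((k : ℕ) + 1)) ^ (m k) with hg
  set Φ : (Σ α : ℕ, Nat.Partition α) → (Fin N → ℕ) :=
    fun s => fun k => s.2.parts.count ((k : ℕ) + 1) with hΦ
  set S : Finset (Σ α : ℕ, Nat.Partition α) :=
    (range N).sigma (fun α => (univ : Finset (Nat.Partition α))) with hS
  have hmemS : ∀ s : (Σ α : ℕ, Nat.Partition α), s ∈ S → s.1 < N := by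
    intro s hs
    exact mem_range.mp (Finset.mem_sigma.mp hs).1
  have hpartslt : ∀ (s : Σ α : ℕ, Nat.Partition α), s.1 < N → ∀ a ∈ s.2.parts, a < N + 1 := by
    intro s hsN a ha
    have h1 : a ≤ s.2.parts.sum := Multiset.le_sum_of_mem ha
    rw [s.2.parts_sum] at h1
    omega
  -- the weight identity
  have h2 : ∀ s : (Σ α : ℕ, Nat.Partition α), s.1 < N → g (Φ s) = x ^ s.1 := by
    intro s hsN
    rw [hg]
    simp only
    have e1 : ∀ k : Fin N, (x ^ ((k : ℕ) + 1)) ^ (Φ s k) = x ^ (((k : ℕ) + 1) * Φ s k) :=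
      fun k => (pow_mul x _ _).symm
    rw [Finset.prod_congr rfl (fun k _ => e1 k), Finset.prod_pow_eq_pow_sum]
    congr 1
    have e2 : ∑ k : Fin N, ((k : ℕ) + 1) * Φ s k
        = ∑ k ∈ range N, (k + 1) * s.2.parts.count (k + 1) := by
      rw [← Fin.sum_univ_eq_sum_range (fun k => (k + 1) * s.2.parts.count (k + 1)) N]
    rw [e2]
    have e3 : ∑ a ∈ range (N + 1), a * s.2.parts.count a
        = ∑ k ∈ range N, (k + 1) * s.2.parts.count (k + 1) + 0 * s.2.parts.count 0 := by
      rw [Finset.sum_range_succ']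
    have e5 : s.2.parts.sum = s.1 := s.2.parts_sum
    have e6 := multiset_sum_count (N + 1) s.2.parts (hpartslt s hsN)
    omega
  -- injectivity
  have hinj : ∀ s ∈ S, ∀ t ∈ S, Φ s = Φ t → s = t := by
    intro s hs t ht hst
    have hsN := hmemS s hs
    have htN := hmemS t ht
    have hparts : s.2.parts = t.2.parts := by
      ext a
      rcases Nat.eq_zero_or_pos a with rfl | hapos
      · rw [Multiset.count_eq_zero_of_notMem, Multiset.count_eq_zero_of_notMem]
        · intro hmem; exact lt_irrefl 0 (t.2.parts_pos hmem)
        · intro hmem; exact lt_irrefl 0 (s.2.parts_pos hmem)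
      · by_cases haN : a ≤ N
        · have hk : a - 1 < N := by omega
          have := congrFun hst ⟨a - 1, hk⟩
          simp only [hΦ] at this
          have ha' : a - 1 + 1 = a := by omega
          rwa [ha'] at this
        · rw [Multiset.count_eq_zero_of_notMem, Multiset.count_eq_zero_of_notMem]
          · intro hmem; exact absurd (hpartslt t htN a hmem) (by omega)
          · intro hmem; exact absurd (hpartslt s hsN a hmem) (by omega)
    have hfst : s.1 = t.1 := by
      rw [← s.2.parts_sum, ← t.2.parts_sum, hparts]
    obtain ⟨α, ps⟩ := s
    obtain ⟨β, pt⟩ := t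
    simp only at hfst
    subst hfst
    exact congrArg (Sigma.mk α) (Nat.Partition.ext hparts)
  -- image inside the box
  have hbox : ∀ s ∈ S, Φ s ∈ Fintype.piFinset (fun _ : Fin N => range N) := by
    intro s hs
    rw [Fintype.mem_piFinset]
    intro k
    rw [mem_range]
    calc Φ s k ≤ Multiset.card s.2.parts := Multiset.count_le_card _ _
      _ ≤ s.2.parts.sum := multiset_card_le_sum _ (fun a ha => s.2.parts_pos ha)
      _ = s.1 := s.2.parts_sum
      _ < N := hmemS s hs
  have hgnonneg : ∀ m : Fin N → ℕ, 0 ≤ g m := by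
    intro m
    exact Finset.prod_nonneg (fun k _ => pow_nonneg (pow_nonneg hx0 _) _)
  calc ∑ α ∈ range N, (Fintype.card (Nat.Partition α) : ℝ) * x ^ α
      = ∑ s ∈ S, x ^ s.1 := by
        rw [hS, Finset.sum_sigma]
        refine Finset.sum_congr rfl fun α _ => ?_
        show (Fintype.card (Nat.Partition α) : ℝ) * x ^ α
            = ∑ _s ∈ (univ : Finset (Nat.Partition α)), x ^ α
        rw [Finset.sum_const, Finset.card_univ, nsmul_eq_mul]
    _ = ∑ s ∈ S, g (Φ s) := Finset.sum_congr rfl fun s hs => (h2 s (hmemS s hs)).symm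
    _ = ∑ m ∈ S.image Φ, g m := (Finset.sum_image hinj).symm
    _ ≤ ∑ m ∈ Fintype.piFinset (fun _ : Fin N => range N), g m := by
        apply Finset.sum_le_sum_of_subset_of_nonneg
        · intro m hm
          obtain ⟨s, hs, rfl⟩ := Finset.mem_image.mp hm
          exact hbox s hs
        · intro m _ _; exact hgnonneg m
    _ = ∏ k : Fin N, ∑ j ∈ range N, (x ^ ((k : ℕ) + 1)) ^ j := by
        rw [Finset.prod_univ_sum]
    _ ≤ ∏ k : Fin N, Real.exp (x ^ ((k : ℕ) + 1) * (1 - x)⁻¹) := by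
        apply Finset.prod_le_prod
        · intro k _
          exact Finset.sum_nonneg fun j _ => pow_nonneg (pow_nonneg hx0 _) _
        · intro k _
          have hxk0 : 0 ≤ x ^ ((k : ℕ) + 1) := pow_nonneg hx0 _
          have hxkx : x ^ ((k : ℕ) + 1) ≤ x := by
            calc x ^ ((k : ℕ) + 1) ≤ x ^ 1 := pow_le_pow_of_le_one hx0 hx1.le (by omega)
              _ = x := pow_one x
          have hxk1 : x ^ ((k : ℕ) + 1) < 1 := lt_of_le_of_lt hxkx hx1
          exact (geom_partial_le hxk0 hxk1 N).trans (inv_one_sub_le_exp hx1 hxk0 hxkx)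
    _ = Real.exp (∑ k : Fin N, x ^ ((k : ℕ) + 1) * (1 - x)⁻¹) := by
        rw [Real.exp_sum]
    _ ≤ Real.exp (x * (1 - x)⁻¹ * (1 - x)⁻¹) := by
        apply Real.exp_le_exp.mpr
        rw [← Finset.sum_mul]
        apply mul_le_mul_of_nonneg_right _ (inv_nonneg.mpr (by linarith))
        have e4 : ∑ k : Fin N, x ^ ((k : ℕ) + 1) = x * ∑ k ∈ range N, x ^ k := by
          rw [Finset.mul_sum, ← Fin.sum_univ_eq_sum_range (fun k => x * x ^ k) N]
          exact Finset.sum_congr rfl fun k _ => by ring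
        rw [e4]
        exact mul_le_mul_of_nonneg_left (geom_partial_le hx0 hx1 N) hx0

private lemma partitionGF_summable {x : ℝ} (hx0 : 0 ≤ x) (hx1 : x < 1) :
    Summable (fun α : ℕ => (Fintype.card (Nat.Partition α) : ℝ) * x ^ α) :=
  summable_of_sum_range_le (fun n => by positivity) (partitionGF_sum_le hx0 hx1)


private lemma norm_le_norm_sub_one_add_one (P : ℂ) : ‖P‖ ≤ ‖P - 1‖ + 1 := by
  calc ‖P‖ = ‖(P - 1) + 1‖ := by rw [sub_add_cancel]
    _ ≤ ‖P - 1‖ + ‖(1:ℂ)‖ := norm_add_le _ _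
    _ = ‖P - 1‖ + 1 := by rw [norm_one]

private lemma prod_sub_one_norm_le {ι : Type*} (f : ι → ℂ) (s : Finset ι) :
    ‖(∏ i ∈ s, f i) - 1‖ ≤ Real.exp (∑ i ∈ s, ‖f i - 1‖) - 1 := by
  classical
  induction s using Finset.cons_induction with
  | empty => simp
  | cons j s hj ih =>
    rw [Finset.prod_cons, Finset.sum_cons]
    set P := ∏ i ∈ s, f i
    set A := ∑ i ∈ s, ‖f i - 1‖
    have hA0 : 0 ≤ A := Finset.sum_nonneg fun i _ => norm_nonneg _
    have hP : ‖P‖ ≤ Real.exp A := by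
      calc ‖P‖ ≤ ‖P - 1‖ + 1 := norm_le_norm_sub_one_add_one P
        _ ≤ Real.exp A := by linarith [ih]
    have key : f j * P - 1 = (f j - 1) * P + (P - 1) := by ring
    rw [key]
    calc ‖(f j - 1) * P + (P - 1)‖ ≤ ‖(f j - 1) * P‖ + ‖P - 1‖ := norm_add_le _ _
      _ = ‖f j - 1‖ * ‖P‖ + ‖P - 1‖ := by rw [norm_mul]
      _ ≤ ‖f j - 1‖ * Real.exp A + (Real.exp A - 1) := by
          have h1 : ‖f j - 1‖ * ‖P‖ ≤ ‖f j - 1‖ * Real.exp A :=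
            mul_le_mul_of_nonneg_left hP (norm_nonneg _)
          linarith [ih]
      _ ≤ Real.exp (‖f j - 1‖ + A) - 1 := by
          rw [Real.exp_add]
          have h2 : 1 + ‖f j - 1‖ ≤ Real.exp ‖f j - 1‖ := by
            linarith [Real.add_one_le_exp ‖f j - 1‖]
          have h3 : 0 < Real.exp A := Real.exp_pos A
          nlinarith [norm_nonneg (f j - 1)]

private lemma multipliable_of_summable_norm_sub_one {ι : Type*} {f : ι → ℂ}
    (h : Summable fun i => ‖f i - 1‖) : Multipliable f := by
  classical
  set a : ι → ℝ := fun i => ‖f i - 1‖ with ha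
  have ha0 : ∀ i, 0 ≤ a i := fun i => norm_nonneg _
  set B : ℝ := Real.exp (∑' i, a i) with hB
  have hB0 : 0 < B := Real.exp_pos _
  have hprodle : ∀ s : Finset ι, ‖∏ i ∈ s, f i‖ ≤ B := by
    intro s
    have h1 := prod_sub_one_norm_le f s
    have h2 : ∑ i ∈ s, a i ≤ ∑' i, a i := Summable.sum_le_tsum s (fun i _ => ha0 i) h
    have h3 : Real.exp (∑ i ∈ s, a i) ≤ B := Real.exp_le_exp.mpr h2
    calc ‖∏ i ∈ s, f i‖ ≤ ‖(∏ i ∈ s, f i) - 1‖ + 1 := norm_le_norm_sub_one_add_one _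
      _ ≤ B := by linarith
  have hcauchy : CauchySeq (fun s : Finset ι => ∏ i ∈ s, f i) := by
    rw [Metric.cauchySeq_iff']
    intro ε hε
    set r : ℝ := Real.log (1 + ε / B) with hr
    have hεB : 0 < ε / B := div_pos hε hB0
    have hr0 : 0 < r := Real.log_pos (by linarith)
    obtain ⟨s₀, hs₀⟩ := summable_iff_vanishing.mp h (Set.Iio r)
      (Iio_mem_nhds hr0)
    refine ⟨s₀, fun n hn => ?_⟩
    have hsplit : (∏ i ∈ n \ s₀, f i) * ∏ i ∈ s₀, f i = ∏ i ∈ n, f i :=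
      Finset.prod_sdiff hn
    rw [dist_eq_norm, ← hsplit]
    have : (∏ i ∈ n \ s₀, f i) * ∏ i ∈ s₀, f i - ∏ i ∈ s₀, f i
        = (∏ i ∈ s₀, f i) * ((∏ i ∈ n \ s₀, f i) - 1) := by ring
    rw [this, norm_mul]
    have hd : Disjoint (n \ s₀) s₀ := Finset.sdiff_disjoint
    have htail : ∑ i ∈ n \ s₀, a i < r := hs₀ (n \ s₀) hd
    have h4 : ‖(∏ i ∈ n \ s₀, f i) - 1‖ ≤ Real.exp (∑ i ∈ n \ s₀, a i) - 1 :=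
      prod_sub_one_norm_le f _
    have h5 : Real.exp (∑ i ∈ n \ s₀, a i) - 1 < ε / B := by
      have := Real.exp_lt_exp.mpr htail
      rw [hr, Real.exp_log (by linarith)] at this
      linarith
    calc ‖∏ i ∈ s₀, f i‖ * ‖(∏ i ∈ n \ s₀, f i) - 1‖
        ≤ B * ‖(∏ i ∈ n \ s₀, f i) - 1‖ :=
          mul_le_mul_of_nonneg_right (hprodle s₀) (norm_nonneg _)
      _ < B * (ε / B) := by
          apply mul_lt_mul_of_pos_left _ hB0
          exact lt_of_le_of_lt h4 h5
      _ = ε := by field_simp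
  obtain ⟨x, hx⟩ := cauchySeq_tendsto_of_complete hcauchy
  exact ⟨x, hx⟩
private lemma summable_partition_mul_pow {w : ℂ} (h : ‖w‖ < 1) :
    Summable (fun α : ℕ => (Fintype.card (Nat.Partition α) : ℂ) * w ^ α) := by
  apply Summable.of_norm
  apply Summable.congr (partitionGF_summable (norm_nonneg w) h)
  intro α
  rw [norm_mul, norm_pow, Complex.norm_natCast]

private lemma local_factor_bound {w : ℂ} {ρ ρ₀ : ℝ} (hw : ‖w‖ ≤ ρ) (hρ : ρ ≤ ρ₀)
    (hρ0 : 0 ≤ ρ) (hρ₀0 : 0 < ρ₀) (hρ₀ : ρ₀ < 1) :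
    ‖(1 - w) * (1 - w ^ 2) * (∑' α : ℕ, (Fintype.card (Nat.Partition α) : ℂ) * w ^ α) - 1‖
      ≤ (5 + 4 * (∑' α : ℕ, (Fintype.card (Nat.Partition (α + 3)) : ℝ) * ρ₀ ^ α)) * ρ ^ 3 := by
  set f : ℕ → ℂ := fun α => (Fintype.card (Nat.Partition α) : ℂ) * w ^ α with hf
  have hw1 : ‖w‖ < 1 := lt_of_le_of_lt (hw.trans hρ) hρ₀
  have hsum : Summable f := summable_partition_mul_pow hw1
  have hs1 : Summable (fun n => f (n + 1)) := (summable_nat_add_iff 1).2 hsum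
  have hs2 : Summable (fun n => f (n + 2)) := (summable_nat_add_iff 2).2 hsum
  have hs3 : Summable (fun n => f (n + 3)) := (summable_nat_add_iff 3).2 hsum
  set R : ℂ := ∑' α : ℕ, f (α + 3) with hR
  have hF : (∑' α : ℕ, f α) = 1 + w + 2 * w ^ 2 + R := by
    rw [Summable.tsum_eq_zero_add hsum, Summable.tsum_eq_zero_add hs1, Summable.tsum_eq_zero_add hs2]
    have e0 : f 0 = 1 := by simp [hf, partCard_zero]
    have e1 : f (0 + 1) = w := by simp [hf, partCard_one]
    have e2 : f (0 + 1 + 1) = 2 * w ^ 2 := by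
      have : (0:ℕ) + 1 + 1 = 2 := rfl
      rw [this, hf]
      simp [partCard_two]
    rw [e0, e1, e2]
    have e3 : (∑' n : ℕ, f (n + 1 + 1 + 1)) = R := by rfl
    rw [e3]
    ring
  -- norm of R
  have hnorm_sum : Summable (fun α : ℕ => ‖f (α + 3)‖) := by
    apply Summable.congr ((summable_nat_add_iff 3).2 (partitionGF_summable (norm_nonneg w) hw1))
    intro α
    rw [hf, norm_mul, norm_pow, Complex.norm_natCast]
  set K : ℝ := ∑' α : ℕ, (Fintype.card (Nat.Partition (α + 3)) : ℝ) * ρ₀ ^ α with hK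
  have hK0 : 0 ≤ K := tsum_nonneg fun α => by positivity
  have hKsummable : Summable (fun α : ℕ => (Fintype.card (Nat.Partition (α + 3)) : ℝ) * ρ₀ ^ α) := by
    have S3 := (summable_nat_add_iff 3).2 (partitionGF_summable hρ₀0.le hρ₀)
    apply Summable.congr (S3.mul_left ((ρ₀ ^ 3)⁻¹))
    intro α
    rw [pow_add]
    field_simp
  have hRnorm : ‖R‖ ≤ K * ρ ^ 3 := by
    calc ‖R‖ ≤ ∑' α : ℕ, ‖f (α + 3)‖ := norm_tsum_le_tsum_norm hnorm_sum
      _ ≤ ∑' α : ℕ, (Fintype.card (Nat.Partition (α + 3)) : ℝ) * ρ₀ ^ α * ρ ^ 3 := by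
          apply Summable.tsum_le_tsum _ hnorm_sum (hKsummable.mul_right _)
          intro α
          rw [hf, norm_mul, norm_pow, Complex.norm_natCast, pow_add]
          have h1 : ‖w‖ ^ α ≤ ρ₀ ^ α := pow_le_pow_left₀ (norm_nonneg w) (hw.trans hρ) α
          have h2 : ‖w‖ ^ 3 ≤ ρ ^ 3 := pow_le_pow_left₀ (norm_nonneg w) hw 3
          have h3 : (0:ℝ) ≤ (Fintype.card (Nat.Partition (α + 3)) : ℝ) := Nat.cast_nonneg _
          calc (Fintype.card (Nat.Partition (α + 3)) : ℝ) * (‖w‖ ^ α * ‖w‖ ^ 3)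
              ≤ (Fintype.card (Nat.Partition (α + 3)) : ℝ) * (ρ₀ ^ α * ρ ^ 3) := by
                apply mul_le_mul_of_nonneg_left _ h3
                exact mul_le_mul h1 h2 (by positivity) (by positivity)
            _ = (Fintype.card (Nat.Partition (α + 3)) : ℝ) * ρ₀ ^ α * ρ ^ 3 := by ring
      _ = K * ρ ^ 3 := by rw [hK, tsum_mul_right]
  -- identity
  have hid : (1 - w) * (1 - w ^ 2) * (∑' α : ℕ, f α) - 1
      = (-2 * w ^ 3 - w ^ 4 + 2 * w ^ 5) + (1 - w) * (1 - w ^ 2) * R := by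
    rw [hF]; ring
  rw [hid]
  have hw3 : ‖w‖ ^ 3 ≤ ρ ^ 3 := pow_le_pow_left₀ (norm_nonneg w) hw 3
  have hρ1 : ρ < 1 := lt_of_le_of_lt hρ hρ₀
  have hws : ∀ k : ℕ, 3 ≤ k → ‖w‖ ^ k ≤ ρ ^ 3 := by
    intro k hk
    calc ‖w‖ ^ k ≤ ρ ^ k := pow_le_pow_left₀ (norm_nonneg w) hw k
      _ ≤ ρ ^ 3 := pow_le_pow_of_le_one hρ0 hρ1.le hk
  have hE : ‖(1 - w) * (1 - w ^ 2)‖ ≤ 4 := by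
    rw [norm_mul]
    have h1 : ‖1 - w‖ ≤ 2 := by
      calc ‖1 - w‖ ≤ ‖(1:ℂ)‖ + ‖w‖ := norm_sub_le _ _
        _ ≤ 1 + 1 := by rw [norm_one]; linarith [hw1]
        _ = 2 := by norm_num
    have h2 : ‖1 - w ^ 2‖ ≤ 2 := by
      calc ‖1 - w ^ 2‖ ≤ ‖(1:ℂ)‖ + ‖w ^ 2‖ := norm_sub_le _ _
        _ ≤ 1 + 1 := by
            rw [norm_one, norm_pow]
            have : ‖w‖ ^ 2 ≤ 1 := pow_le_one₀ (norm_nonneg w) hw1.le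
            linarith
        _ = 2 := by norm_num
    calc ‖1 - w‖ * ‖1 - w ^ 2‖ ≤ 2 * 2 :=
        mul_le_mul h1 h2 (norm_nonneg _) (by norm_num)
      _ = 4 := by norm_num
  calc ‖(-2 * w ^ 3 - w ^ 4 + 2 * w ^ 5) + (1 - w) * (1 - w ^ 2) * R‖
      ≤ ‖(-2 : ℂ) * w ^ 3 - w ^ 4 + 2 * w ^ 5‖ + ‖(1 - w) * (1 - w ^ 2) * R‖ := norm_add_le _ _
    _ ≤ (2 * ‖w‖ ^ 3 + ‖w‖ ^ 4 + 2 * ‖w‖ ^ 5) + 4 * (K * ρ ^ 3) := by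
        have ha : ‖(-2 : ℂ) * w ^ 3 - w ^ 4 + 2 * w ^ 5‖
            ≤ 2 * ‖w‖ ^ 3 + ‖w‖ ^ 4 + 2 * ‖w‖ ^ 5 := by
          calc ‖(-2 : ℂ) * w ^ 3 - w ^ 4 + 2 * w ^ 5‖
              ≤ ‖(-2 : ℂ) * w ^ 3 - w ^ 4‖ + ‖(2:ℂ) * w ^ 5‖ := norm_add_le _ _
            _ ≤ (‖(-2 : ℂ) * w ^ 3‖ + ‖w ^ 4‖) + ‖(2:ℂ) * w ^ 5‖ := by
                linarith [norm_sub_le ((-2 : ℂ) * w ^ 3) (w ^ 4)]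
            _ = 2 * ‖w‖ ^ 3 + ‖w‖ ^ 4 + 2 * ‖w‖ ^ 5 := by
                rw [norm_mul, norm_mul, norm_pow, norm_pow, norm_pow]
                norm_num
        have hb : ‖(1 - w) * (1 - w ^ 2) * R‖ ≤ 4 * (K * ρ ^ 3) := by
          rw [norm_mul]
          exact mul_le_mul hE hRnorm (norm_nonneg _) (by norm_num)
        linarith
    _ ≤ (5 + 4 * K) * ρ ^ 3 := by
        have h3 := hws 3 le_rfl
        have h4 := hws 4 (by norm_num)
        have h5 := hws 5 (by norm_num)
        nlinarith [pow_nonneg hρ0 3]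

/-! ### The multiplicative function counting abelian groups -/

/-- `abelianCount n` is the number of isomorphism classes of abelian groups of order `n`:
the multiplicative function with `abelianCount (p^α) = P(α)`, the number of partitions of `α`. -/
def abelianCount (n : ℕ) : ℕ :=
  n.factorization.prod fun _ α => Fintype.card (Nat.Partition α)

private lemma abelianCount_one : abelianCount 1 = 1 := by
  simp [abelianCount]

private lemma abelianCount_prime_pow {p : ℕ} (hp : p.Prime) (α : ℕ) :
    abelianCount (p ^ α) = Fintype.card (Nat.Partition α) := by
  rw [abelianCount, hp.factorization_pow, Finsupp.prod_single_index]
  exact partCard_zero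

private lemma abelianCount_mul {m n : ℕ} (h : m.Coprime n) :
    abelianCount (m * n) = abelianCount m * abelianCount n := by
  rw [abelianCount, Nat.factorization_mul_of_coprime h,
    Finsupp.prod_add_index_of_disjoint, abelianCount, abelianCount]
  rw [Nat.support_factorization, Nat.support_factorization]
  exact Nat.Coprime.disjoint_primeFactors h

private lemma fterm_eq {r₁ : ℕ} (χ : DirichletCharacter ℂ r₁) (z : ℂ) {p : ℕ} (hp : p.Prime)
    (α : ℕ) :
    (abelianCount (p ^ α) : ℂ) * χ (((p ^ α : ℕ) : ZMod r₁)) * (((p ^ α : ℕ)) : ℂ) ^ (-z)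
      = (Fintype.card (Nat.Partition α) : ℂ) * (χ (p : ZMod r₁) * (p : ℂ) ^ (-z)) ^ α := by
  rw [abelianCount_prime_pow hp α]
  rw [Nat.cast_pow, Nat.cast_pow, map_pow]
  rw [← Complex.natCast_cpow_natCast_mul p α (-z), Complex.cpow_nat_mul]
  ring

private lemma gterm_eq {r₁ : ℕ} (χ : DirichletCharacter ℂ r₁) (z : ℂ) (p : ℕ) (α : ℕ) :
    (abelianCount (p ^ α) : ℂ) * χ ((p : ZMod r₁) ^ α) * (p : ℂ) ^ (-(α : ℂ) * z)
      = (abelianCount (p ^ α) : ℂ) * χ (((p ^ α : ℕ) : ZMod r₁)) * (((p ^ α : ℕ)) : ℂ) ^ (-z) := by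
  rw [Nat.cast_pow, Nat.cast_pow, ← Complex.natCast_cpow_natCast_mul p α (-z),
    show ((α : ℂ) * (-z)) = (-(α : ℂ) * z) by ring]

/-- The Euler factor at the prime `p` of the function `G(z, χ)`. -/
noncomputable def eulerFactorG {r₁ : ℕ} (χ : DirichletCharacter ℂ r₁) (z : ℂ) (p : ℕ) : ℂ :=
  (1 - χ (p : ZMod r₁) * (p : ℂ) ^ (-z)) *
    (1 - (χ (p : ZMod r₁)) ^ 2 * (p : ℂ) ^ (-(2 * z))) *
    ∑' α : ℕ, (abelianCount (p ^ α) : ℂ) * χ ((p : ZMod r₁) ^ α) * (p : ℂ) ^ (-(α : ℂ) * z)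

private lemma eulerFactorG_eq_poly {r₁ : ℕ} (χ : DirichletCharacter ℂ r₁) (z : ℂ) (p : ℕ) :
    eulerFactorG χ z p
      = (1 - χ (p : ZMod r₁) * (p : ℂ) ^ (-z)) *
          (1 - (χ (p : ZMod r₁) * (p : ℂ) ^ (-z)) ^ 2) *
          ∑' α : ℕ, (abelianCount (p ^ α) : ℂ) * χ ((p : ZMod r₁) ^ α)
            * (p : ℂ) ^ (-(α : ℂ) * z) := by
  rw [eulerFactorG]
  congr 2
  rw [show (-(2 * z)) = ((2:ℕ) : ℂ) * (-z) by push_cast; ring, Complex.cpow_nat_mul]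
  rw [mul_pow]

private lemma eulerFactorG_tsum_eq {r₁ : ℕ} (χ : DirichletCharacter ℂ r₁) (z : ℂ) {p : ℕ}
    (hp : p.Prime) :
    (∑' α : ℕ, (abelianCount (p ^ α) : ℂ) * χ ((p : ZMod r₁) ^ α) * (p : ℂ) ^ (-(α : ℂ) * z))
      = ∑' α : ℕ, (Fintype.card (Nat.Partition α) : ℂ)
          * (χ (p : ZMod r₁) * (p : ℂ) ^ (-z)) ^ α :=
  tsum_congr fun α => (gterm_eq χ z p α).trans (fterm_eq χ z hp α)

private lemma norm_w_le {r₁ : ℕ} (χ : DirichletCharacter ℂ r₁) {z : ℂ} (hz : z.re ≠ 0)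
    (p : ℕ) : ‖χ (p : ZMod r₁) * (p : ℂ) ^ (-z)‖ ≤ (p : ℝ) ^ (-z.re) := by
  rw [norm_mul]
  have h1 : ‖(p : ℂ) ^ (-z)‖ = (p : ℝ) ^ ((-z).re) :=
    Complex.norm_natCast_cpow_of_re_ne_zero p (by rwa [Complex.neg_re, neg_ne_zero])
  rw [h1, Complex.neg_re]
  calc ‖χ (p : ZMod r₁)‖ * (p : ℝ) ^ (-z.re) ≤ 1 * (p : ℝ) ^ (-z.re) :=
      mul_le_mul_of_nonneg_right (DirichletCharacter.norm_le_one χ _)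
        (Real.rpow_nonneg (Nat.cast_nonneg p) _)
    _ = (p : ℝ) ^ (-z.re) := one_mul _

private lemma rpow_prime_le {σ : ℝ} (hσ : 0 < σ) {p : ℕ} (hp : 2 ≤ p) :
    (p : ℝ) ^ (-σ) ≤ (2 : ℝ) ^ (-σ) := by
  rw [Real.rpow_neg (by positivity), Real.rpow_neg (by norm_num)]
  have h2 : (0:ℝ) < (2:ℝ) ^ σ := Real.rpow_pos_of_pos (by norm_num) σ
  have hle : (2:ℝ) ^ σ ≤ (p:ℝ) ^ σ :=
    Real.rpow_le_rpow (by norm_num) (by exact_mod_cast hp) hσ.le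
  exact inv_anti₀ h2 hle

private lemma two_rpow_neg_lt_one {σ : ℝ} (hσ : 0 < σ) : (2 : ℝ) ^ (-σ) < 1 :=
  Real.rpow_lt_one_of_one_lt_of_neg (by norm_num) (by linarith)

private lemma one_sub_ne_zero {w : ℂ} (h : ‖w‖ < 1) : (1 : ℂ) - w ≠ 0 := by
  intro h0
  rw [sub_eq_zero] at h0
  rw [← h0] at h
  simp at h

private lemma multipliable_eulerFactorG {r₁ : ℕ} (χ : DirichletCharacter ℂ r₁) {z : ℂ}
    (hz : 1 / 3 < z.re) :
    Multipliable fun p : Nat.Primes => eulerFactorG χ z (p : ℕ) := by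
  have hσ0 : 0 < z.re := by linarith
  set σ := z.re with hσ
  set ρ₀ : ℝ := (2 : ℝ) ^ (-σ) with hρ₀def
  have hρ₀0 : 0 < ρ₀ := Real.rpow_pos_of_pos (by norm_num) _
  have hρ₀1 : ρ₀ < 1 := two_rpow_neg_lt_one hσ0
  set C : ℝ := 5 + 4 * (∑' α : ℕ, (Fintype.card (Nat.Partition (α + 3)) : ℝ) * ρ₀ ^ α) with hC
  apply multipliable_of_summable_norm_sub_one
  have hbound : ∀ p : Nat.Primes, ‖eulerFactorG χ z (p : ℕ) - 1‖ ≤ C * ((p : ℝ) ^ (-σ)) ^ 3 := by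
    intro p
    have hp := p.2
    rw [eulerFactorG_eq_poly, eulerFactorG_tsum_eq χ z hp]
    exact local_factor_bound (w := χ ((p : ℕ) : ZMod r₁) * ((p : ℕ) : ℂ) ^ (-z))
      (ρ := ((p : ℕ) : ℝ) ^ (-σ)) (ρ₀ := ρ₀)
      (norm_w_le χ (by linarith) (p : ℕ)) (rpow_prime_le hσ0 hp.two_le)
      (Real.rpow_nonneg (Nat.cast_nonneg _) _) hρ₀0 hρ₀1
  apply Summable.of_nonneg_of_le (fun p => norm_nonneg _) hbound
  have hsum : Summable fun p : Nat.Primes => ((p : ℕ) : ℝ) ^ (-σ * 3) :=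
    Nat.Primes.summable_rpow.mpr (by rw [hσ]; linarith)
  apply Summable.congr (hsum.mul_left C)
  intro p
  congr 1
  rw [← Real.rpow_natCast (((p : ℕ) : ℝ) ^ (-σ)) 3, ← Real.rpow_mul (Nat.cast_nonneg _)]
  norm_num

private lemma abelian_factor_eq {σ : ℝ} {N n : ℕ} (hn0 : n ≠ 0) (hnN : n < N) :
    (abelianCount n : ℝ) * (n : ℝ) ^ (-σ)
      = ∏ p ∈ N.primesBelow, (Fintype.card (Nat.Partition (n.factorization p)) : ℝ)
          * (((p : ℝ)) ^ (-σ)) ^ (n.factorization p) := by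
  classical
  have hsupp : n.factorization.support ⊆ N.primesBelow := by
    intro p hp
    rw [Nat.support_factorization] at hp
    have hple : p ≤ n := Nat.le_of_dvd (Nat.pos_of_ne_zero hn0) (Nat.dvd_of_mem_primeFactors hp)
    exact Nat.mem_primesBelow.mpr ⟨lt_of_le_of_lt hple hnN, Nat.prime_of_mem_primeFactors hp⟩
  have h1 : (abelianCount n : ℝ)
      = ∏ p ∈ n.factorization.support, (Fintype.card (Nat.Partition (n.factorization p)) : ℝ) := by
    rw [abelianCount, Finsupp.prod]
    push_cast
    rfl
  have h2 : (n : ℝ) ^ (-σ)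
      = ∏ p ∈ n.factorization.support, (((p : ℝ)) ^ (-σ)) ^ (n.factorization p) := by
    have hn : (n : ℝ) = ∏ p ∈ n.factorization.support, ((p : ℝ)) ^ (n.factorization p) := by
      conv_lhs => rw [← Nat.factorization_prod_pow_eq_self hn0]
      rw [Finsupp.prod]
      push_cast
      rfl
    rw [hn, ← Real.finset_prod_rpow _ _ (fun p _ => by positivity) (-σ)]
    refine Finset.prod_congr rfl fun p hp => ?_
    have hp0 : (0:ℝ) ≤ (p : ℝ) := Nat.cast_nonneg p
    rw [← Real.rpow_natCast ((p:ℝ)) (n.factorization p), ← Real.rpow_mul hp0,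
      ← Real.rpow_natCast ((p:ℝ) ^ (-σ)) (n.factorization p), ← Real.rpow_mul hp0]
    ring_nf
  rw [h1, h2, ← Finset.prod_mul_distrib]
  apply Finset.prod_subset hsupp
  intro p _ hps
  rw [Finsupp.notMem_support_iff.mp hps]
  simp

private lemma summable_abelian {σ : ℝ} (hσ : 1 < σ) :
    Summable (fun n : ℕ => (abelianCount n : ℝ) * (n : ℝ) ^ (-σ)) := by
  classical
  have hσ0 : 0 < σ := by linarith
  set x₀ : ℝ := (2 : ℝ) ^ (-σ) with hx₀
  have hx₀0 : 0 < x₀ := Real.rpow_pos_of_pos (by norm_num) _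
  have hx₀1 : x₀ < 1 := two_rpow_neg_lt_one hσ0
  set C : ℝ := ∑' j : ℕ, (Fintype.card (Nat.Partition (j + 1)) : ℝ) * x₀ ^ j with hC
  have hCsummable : Summable (fun j : ℕ => (Fintype.card (Nat.Partition (j + 1)) : ℝ) * x₀ ^ j) := by
    have S1 := (summable_nat_add_iff 1).2 (partitionGF_summable hx₀0.le hx₀1)
    apply Summable.congr (S1.mul_left (x₀⁻¹))
    intro j
    rw [pow_add]
    field_simp
  have hC0 : 0 ≤ C := tsum_nonneg fun j => by positivity
  have hT : Summable (fun n : ℕ => (n : ℝ) ^ (-σ)) :=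
    Real.summable_nat_rpow.mpr (by linarith)
  set T : ℝ := ∑' n : ℕ, (n : ℝ) ^ (-σ) with hT'
  have hT0 : 0 ≤ T := tsum_nonneg fun n => Real.rpow_nonneg (Nat.cast_nonneg n) _
  have hlocal : ∀ N : ℕ, ∀ p ∈ N.primesBelow,
      ∑ j ∈ range N, (Fintype.card (Nat.Partition j) : ℝ) * ((p : ℝ) ^ (-σ)) ^ j
        ≤ Real.exp (C * ((p : ℝ) ^ (-σ))) := by
    intro N p hp
    have hp2 : 2 ≤ p := (Nat.prime_of_mem_primesBelow hp).two_le
    set y : ℝ := (p : ℝ) ^ (-σ) with hy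
    have hy0 : 0 < y := Real.rpow_pos_of_pos (by positivity) _
    have hyx : y ≤ x₀ := rpow_prime_le hσ0 hp2
    have hy1 : y < 1 := lt_of_le_of_lt hyx hx₀1
    have hys : Summable (fun j : ℕ => (Fintype.card (Nat.Partition j) : ℝ) * y ^ j) :=
      partitionGF_summable hy0.le hy1
    have h1 : ∑ j ∈ range N, (Fintype.card (Nat.Partition j) : ℝ) * y ^ j
        ≤ ∑' j : ℕ, (Fintype.card (Nat.Partition j) : ℝ) * y ^ j :=
      Summable.sum_le_tsum _ (fun j _ => by positivity) hys
    have hs1 := (summable_nat_add_iff 1).2 hys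
    have h2 : (∑' j : ℕ, (Fintype.card (Nat.Partition j) : ℝ) * y ^ j)
        = 1 + ∑' j : ℕ, (Fintype.card (Nat.Partition (j + 1)) : ℝ) * y ^ (j + 1) := by
      rw [Summable.tsum_eq_zero_add hys]
      norm_num
    have hys' : Summable (fun j : ℕ => (Fintype.card (Nat.Partition (j + 1)) : ℝ) * y ^ j) := by
      apply Summable.congr (hs1.mul_left (y⁻¹))
      intro j
      rw [pow_add]
      field_simp
    have h3 : (∑' j : ℕ, (Fintype.card (Nat.Partition (j + 1)) : ℝ) * y ^ (j + 1))
        = y * ∑' j : ℕ, (Fintype.card (Nat.Partition (j + 1)) : ℝ) * y ^ j := by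
      rw [← tsum_mul_left]
      exact tsum_congr fun j => by ring
    have h4 : (∑' j : ℕ, (Fintype.card (Nat.Partition (j + 1)) : ℝ) * y ^ j) ≤ C := by
      apply Summable.tsum_le_tsum _ hys' hCsummable
      intro j
      apply mul_le_mul_of_nonneg_left (pow_le_pow_left₀ hy0.le hyx j) (Nat.cast_nonneg _)
    calc ∑ j ∈ range N, (Fintype.card (Nat.Partition j) : ℝ) * y ^ j
        ≤ 1 + y * ∑' j : ℕ, (Fintype.card (Nat.Partition (j + 1)) : ℝ) * y ^ j := by
          rw [← h3, ← h2]; exact h1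
      _ ≤ 1 + C * y := by
          have := mul_le_mul_of_nonneg_left h4 hy0.le
          linarith [this]
      _ ≤ Real.exp (C * y) := by linarith [Real.add_one_le_exp (C * y)]
  apply summable_of_sum_range_le (c := Real.exp (C * T)) (fun n => by positivity)
  intro N
  have hzero : ∑ n ∈ range N, (abelianCount n : ℝ) * (n : ℝ) ^ (-σ)
      = ∑ n ∈ Finset.Ico 1 N, (abelianCount n : ℝ) * (n : ℝ) ^ (-σ) := by
    apply (Finset.sum_subset (by intro n hn; rw [Finset.mem_Ico] at hn; exact mem_range.mpr hn.2) _).symm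
    intro n hn hn'
    have hn0 : n = 0 := by
      rw [mem_range] at hn
      rw [Finset.mem_Ico] at hn'
      omega
    rw [hn0]
    rw [Nat.cast_zero, Real.zero_rpow (by linarith)]
    ring
  rw [hzero]
  set Φ : ℕ → ({p // p ∈ N.primesBelow} → ℕ) := fun n => fun p => n.factorization p.1 with hΦ
  set g : ({p // p ∈ N.primesBelow} → ℕ) → ℝ :=
    fun m => ∏ p : {p // p ∈ N.primesBelow},
      (Fintype.card (Nat.Partition (m p)) : ℝ) * (((p.1 : ℝ)) ^ (-σ)) ^ (m p) with hg
  have hgnonneg : ∀ m, 0 ≤ g m := fun m => Finset.prod_nonneg fun p _ => by positivity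
  have hΦval : ∀ n ∈ Finset.Ico 1 N, g (Φ n) = (abelianCount n : ℝ) * (n : ℝ) ^ (-σ) := by
    intro n hn
    rw [Finset.mem_Ico] at hn
    rw [abelian_factor_eq (by omega) hn.2, hg]
    exact (Finset.prod_coe_sort N.primesBelow
      (fun p => (Fintype.card (Nat.Partition (n.factorization p)) : ℝ)
        * (((p : ℝ)) ^ (-σ)) ^ (n.factorization p)))
  have hinj : ∀ n ∈ Finset.Ico 1 N, ∀ m ∈ Finset.Ico 1 N, Φ n = Φ m → n = m := by
    intro n hn m hm hnm
    rw [Finset.mem_Ico] at hn hm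
    apply Nat.eq_of_factorization_eq (by omega) (by omega)
    intro q
    by_cases hq : q.Prime
    · by_cases hqN : q < N
      · exact congrFun hnm ⟨q, Nat.mem_primesBelow.mpr ⟨hqN, hq⟩⟩
      · rw [Nat.factorization_eq_zero_of_lt (by omega), Nat.factorization_eq_zero_of_lt (by omega)]
    · rw [Nat.factorization_eq_zero_of_not_prime n hq, Nat.factorization_eq_zero_of_not_prime m hq]
  have hbox : ∀ n ∈ Finset.Ico 1 N, Φ n ∈ Fintype.piFinset (fun _ => range N) := by
    intro n hn
    rw [Finset.mem_Ico] at hn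
    rw [Fintype.mem_piFinset]
    intro p
    rw [mem_range]
    exact lt_trans (Nat.factorization_lt p.1 (by omega)) hn.2
  calc ∑ n ∈ Finset.Ico 1 N, (abelianCount n : ℝ) * (n : ℝ) ^ (-σ)
      = ∑ n ∈ Finset.Ico 1 N, g (Φ n) := (Finset.sum_congr rfl fun n hn => (hΦval n hn).symm)
    _ = ∑ m ∈ (Finset.Ico 1 N).image Φ, g m := (Finset.sum_image hinj).symm
    _ ≤ ∑ m ∈ Fintype.piFinset (fun _ : {p // p ∈ N.primesBelow} => range N), g m := by
        apply Finset.sum_le_sum_of_subset_of_nonneg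
        · intro m hm
          obtain ⟨n, hn, rfl⟩ := Finset.mem_image.mp hm
          exact hbox n hn
        · intro m _ _; exact hgnonneg m
    _ = ∏ p : {p // p ∈ N.primesBelow}, ∑ j ∈ range N,
          (Fintype.card (Nat.Partition j) : ℝ) * (((p.1 : ℝ)) ^ (-σ)) ^ j := by
        rw [Finset.prod_univ_sum]
    _ ≤ ∏ p : {p // p ∈ N.primesBelow}, Real.exp (C * ((p.1 : ℝ) ^ (-σ))) := by
        apply Finset.prod_le_prod
        · intro p _; exact Finset.sum_nonneg fun j _ => by positivity
        · intro p _; exact hlocal N p.1 p.2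
    _ = Real.exp (∑ p : {p // p ∈ N.primesBelow}, C * ((p.1 : ℝ) ^ (-σ))) := by
        rw [Real.exp_sum]
    _ ≤ Real.exp (C * T) := by
        apply Real.exp_le_exp.mpr
        rw [← Finset.mul_sum]
        apply mul_le_mul_of_nonneg_left _ hC0
        have e1 : ∑ p : {p // p ∈ N.primesBelow}, ((p.1 : ℝ) ^ (-σ))
            = ∑ p ∈ N.primesBelow, ((p : ℝ) ^ (-σ)) :=
          Finset.sum_coe_sort N.primesBelow (fun p => ((p : ℝ) ^ (-σ)))
        rw [e1]
        have hsub : N.primesBelow ⊆ range N := fun p hp =>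
          mem_range.mpr (Nat.lt_of_mem_primesBelow hp)
        calc ∑ p ∈ N.primesBelow, ((p : ℝ) ^ (-σ))
            ≤ ∑ n ∈ range N, ((n : ℝ) ^ (-σ)) :=
              Finset.sum_le_sum_of_subset_of_nonneg hsub
                (fun n _ _ => Real.rpow_nonneg (Nat.cast_nonneg n) _)
          _ ≤ T := Summable.sum_le_tsum _ (fun n _ => Real.rpow_nonneg (Nat.cast_nonneg n) _) hT


theorem abelianCount_LSeries_factorization (r₁ : ℕ) [NeZero r₁]
    (χ : DirichletCharacter ℂ r₁) :
    (∀ z : ℂ, 1 / 3 < z.re →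
      Multipliable fun p : Nat.Primes => eulerFactorG χ z (p : ℕ)) ∧
    ∀ z : ℂ, 1 < z.re →
      (∑' n : ℕ, (abelianCount n : ℂ) * χ (n : ZMod r₁) * (n : ℂ) ^ (-z)) =
        DirichletCharacter.LFunction χ z * DirichletCharacter.LFunction (χ ^ 2) (2 * z) *
          ∏' p : Nat.Primes, eulerFactorG χ z (p : ℕ) := by
  constructor
  · intro z hz
    exact multipliable_eulerFactorG χ hz
  · intro z hz
    have hσ0 : 0 < z.re := by linarith
    have hzne : z ≠ 0 := by
      intro h
      rw [h] at hz
      simp at hz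
      linarith
    have hz13 : 1 / 3 < z.re := by linarith
    have hz2 : 1 < (2 * z).re := by
      have : (2 * z).re = 2 * z.re := by
        simp [Complex.mul_re]
      rw [this]
      linarith
    set f : ℕ → ℂ := fun n => (abelianCount n : ℂ) * χ (n : ZMod r₁) * (n : ℂ) ^ (-z) with hf
    have hf1 : f 1 = 1 := by
      rw [hf]
      simp [abelianCount_one]
    have hf0 : f 0 = 0 := by
      rw [hf]
      simp only [Nat.cast_zero]
      rw [Complex.zero_cpow (neg_ne_zero.mpr hzne)]
      ring
    have hmul : ∀ {m n : ℕ}, m.Coprime n → f (m * n) = f m * f n := by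
      intro m n hmn
      rw [hf]
      simp only [Nat.cast_mul, abelianCount_mul hmn, map_mul]
      rw [Complex.natCast_mul_natCast_cpow]
      ring
    have hnormsum : Summable (fun n => ‖f n‖) := by
      apply Summable.of_nonneg_of_le (fun n => norm_nonneg _) _
        (summable_abelian (σ := z.re) hz)
      intro n
      rw [hf]
      simp only
      rw [norm_mul, norm_mul, Complex.norm_natCast,
        Complex.norm_natCast_cpow_of_re_ne_zero n
          (by rw [Complex.neg_re]; exact neg_ne_zero.mpr (by linarith)), Complex.neg_re]
      calc (abelianCount n : ℝ) * ‖χ (n : ZMod r₁)‖ * (n : ℝ) ^ (-z.re)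
          ≤ (abelianCount n : ℝ) * 1 * (n : ℝ) ^ (-z.re) := by
            apply mul_le_mul_of_nonneg_right _ (Real.rpow_nonneg (Nat.cast_nonneg n) _)
            exact mul_le_mul_of_nonneg_left (DirichletCharacter.norm_le_one χ _)
              (Nat.cast_nonneg _)
        _ = (abelianCount n : ℝ) * (n : ℝ) ^ (-z.re) := by ring
    have hA := EulerProduct.eulerProduct_hasProd hf1 hmul hnormsum hf0
    have hL1 := DirichletCharacter.LSeries_eulerProduct_hasProd χ hz
    have hL2 := DirichletCharacter.LSeries_eulerProduct_hasProd (χ ^ 2) hz2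
    have hgm := multipliable_eulerFactorG χ hz13
    have hpoint : ∀ p : Nat.Primes,
        (1 - χ (((p : ℕ) : ZMod r₁)) * ((p : ℕ) : ℂ) ^ (-z))⁻¹ *
          (1 - (χ ^ 2) (((p : ℕ) : ZMod r₁)) * ((p : ℕ) : ℂ) ^ (-(2 * z)))⁻¹ *
          eulerFactorG χ z (p : ℕ)
        = ∑' e : ℕ, f ((p : ℕ) ^ e) := by
      intro p
      have hp := p.2
      set w : ℂ := χ (((p : ℕ)) : ZMod r₁) * ((p : ℕ) : ℂ) ^ (-z) with hw
      have hwn : ‖w‖ < 1 := by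
        rw [hw]
        exact lt_of_le_of_lt (norm_w_le χ (by linarith) _)
          (lt_of_le_of_lt (rpow_prime_le hσ0 hp.two_le) (two_rpow_neg_lt_one hσ0))
      have hw1 : (1 : ℂ) - w ≠ 0 := one_sub_ne_zero hwn
      have hw2 : (1 : ℂ) - w ^ 2 ≠ 0 := by
        apply one_sub_ne_zero
        rw [norm_pow]
        exact pow_lt_one₀ (norm_nonneg w) hwn (by norm_num)
      have hF : eulerFactorG χ z (p : ℕ)
          = (1 - w) * (1 - w ^ 2)
            * ∑' α : ℕ, (Fintype.card (Nat.Partition α) : ℂ) * w ^ α := by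
        rw [hw, eulerFactorG_eq_poly, eulerFactorG_tsum_eq χ z hp]
      have hpow2 : (χ ^ 2) (((p : ℕ)) : ZMod r₁) * ((p : ℕ) : ℂ) ^ (-(2 * z)) = w ^ 2 := by
        rw [MulChar.pow_apply' χ (by norm_num) _,
          show (-(2 * z)) = ((2:ℕ) : ℂ) * (-z) by push_cast; ring,
          Complex.cpow_nat_mul, hw, mul_pow]
      have hAF : (∑' e : ℕ, f ((p : ℕ) ^ e))
          = ∑' α : ℕ, (Fintype.card (Nat.Partition α) : ℂ) * w ^ α := by
        rw [hw, hf]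
        exact tsum_congr fun e => fterm_eq χ z hp e
      rw [hpow2, hF, hAF]
      field_simp
    rw [DirichletCharacter.LFunction_eq_LSeries χ hz,
      DirichletCharacter.LFunction_eq_LSeries (χ ^ 2) hz2,
      ← hL1.tprod_eq, ← hL2.tprod_eq, ← Multipliable.tprod_mul hL1.multipliable hL2.multipliable,
      ← Multipliable.tprod_mul (hL1.multipliable.mul hL2.multipliable) hgm, ← hA.tprod_eq]
    exact tprod_congr fun p => (hpoint p).symm
end

section
/- There is an absolute constant C > 0 such that for every positive integer r, every non-principal Dirichlet character χ modulo r, and all real σ ≥ 1 and t, one has |L(σ + it, χ)| ≤ C·log(r(|t| + 2)), where L(·,χ) is the Dirichlet L-function of χ. -/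
open Finset Filter Complex Topology


/-- Partial sums of a nonprincipal Dirichlet character are bounded by the modulus. -/
lemma aux_charSum_bound {r : ℕ} [NeZero r] (χ : DirichletCharacter ℂ r) (hχ : χ ≠ 1)
    (n : ℕ) : ‖∑ k ∈ range n, χ (k : ZMod r)‖ ≤ r := by
  induction n using Nat.strong_induction_on with
  | _ n ih =>
    rcases lt_or_ge n r with h | h
    · calc ‖∑ k ∈ range n, χ (k : ZMod r)‖
          ≤ ∑ k ∈ range n, ‖χ (k : ZMod r)‖ := norm_sum_le _ _
        _ ≤ ∑ _k ∈ range n, (1 : ℝ) := Finset.sum_le_sum fun k _ => χ.norm_le_one _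
        _ = n := by simp
        _ ≤ r := by exact_mod_cast h.le
    · have hr : 0 < r := Nat.pos_of_ne_zero (NeZero.ne r)
      have hkey : ∑ k ∈ Ico (n - r) n, χ (k : ZMod r) = 0 := by
        have h1 : ∑ k ∈ Ico (n - r) n, χ (k : ZMod r)
            = ∑ k ∈ range r, χ (((n - r : ℕ) : ZMod r) + (k : ZMod r)) := by
          rw [Finset.sum_Ico_eq_sum_range]
          have : n - (n - r) = r := by omega
          rw [this]
          exact Finset.sum_congr rfl fun k _ => by push_cast; ring_nf
        have h2 : ∑ k ∈ range r, χ (((n - r : ℕ) : ZMod r) + (k : ZMod r))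
            = ∑ x : ZMod r, χ (((n - r : ℕ) : ZMod r) + x) := by
          refine Finset.sum_nbij' (fun k => (k : ZMod r)) (fun x => x.val) ?_ ?_ ?_ ?_ ?_
          · intro k _; exact Finset.mem_univ _
          · intro x _; exact Finset.mem_range.mpr (ZMod.val_lt x)
          · intro k hk; exact ZMod.val_cast_of_lt (Finset.mem_range.mp hk)
          · intro x _; exact ZMod.natCast_zmod_val x
          · intro k _; rfl
        have h3 : ∑ x : ZMod r, χ (((n - r : ℕ) : ZMod r) + x) = ∑ x : ZMod r, χ x :=
          Fintype.sum_equiv (Equiv.addLeft ((n - r : ℕ) : ZMod r)) _ _ fun x => rfl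
        rw [h1, h2, h3, χ.sum_eq_zero_of_ne_one hχ]
      have hsplit : ∑ k ∈ range n, χ (k : ZMod r)
          = ∑ k ∈ range (n - r), χ (k : ZMod r) := by
        rw [range_eq_Ico, ← Finset.sum_Ico_consecutive _ (Nat.zero_le (n - r)) (by omega),
          ← range_eq_Ico, hkey, add_zero]
      rw [hsplit]
      exact ih (n - r) (by omega)


/-- MVT bound for differences of complex powers. -/
lemma aux_cpow_diff_bound {s : ℂ} (hσ : 1 ≤ s.re) {n : ℕ} (hn : 1 ≤ n) :
    ‖((n + 1 : ℕ) : ℂ) ^ (-s) - ((n : ℕ) : ℂ) ^ (-s)‖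
      ≤ ‖s‖ * ((n : ℝ) ^ 2)⁻¹ := by
  rw [show ((n + 1 : ℕ) : ℂ) = (((n : ℝ) + 1 : ℝ) : ℂ) by push_cast; ring,
    show ((n : ℕ) : ℂ) = (((n : ℝ) : ℝ) : ℂ) by norm_num]
  have hn1 : (1 : ℝ) ≤ (n : ℝ) := by exact_mod_cast hn
  set K : Set ℝ := Set.Icc (n : ℝ) ((n : ℝ) + 1) with hK
  have hderiv : ∀ x ∈ K, HasDerivWithinAt (fun x : ℝ => ((x : ℂ)) ^ (-s))
      (-s * (x : ℂ) ^ (-s - 1)) K x := by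
    intro x hx
    have hx0 : (0 : ℝ) < x := lt_of_lt_of_le (by linarith) hx.1
    have h0 : (x : ℂ) ∈ Complex.slitPlane := Complex.ofReal_mem_slitPlane.2 hx0
    have hd : HasDerivAt (fun z : ℂ => z ^ (-s)) (-s * (x : ℂ) ^ (-s - 1) * 1) (x : ℂ) :=
      (hasDerivAt_id (x : ℂ)).cpow_const h0
    have := (hd.comp_ofReal (z := x))
    simpa using this.hasDerivWithinAt
  have hbound : ∀ x ∈ K, ‖-s * (x : ℂ) ^ (-s - 1)‖ ≤ ‖s‖ * ((n : ℝ) ^ 2)⁻¹ := by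
    intro x hx
    have hx0 : (0 : ℝ) < x := lt_of_lt_of_le (by linarith) hx.1
    rw [norm_mul, norm_neg]
    have h1 : ‖(x : ℂ) ^ (-s - 1)‖ = x ^ ((-s - 1).re) := by
      rw [Complex.norm_cpow_eq_rpow_re_of_pos hx0]
    have h2 : x ^ ((-s - 1).re) ≤ (n : ℝ) ^ ((-s - 1).re) := by
      refine Real.rpow_le_rpow_of_nonpos (by linarith) hx.1 ?_
      simp only [Complex.sub_re, Complex.neg_re, Complex.one_re]
      linarith
    have h3 : (n : ℝ) ^ ((-s - 1).re) ≤ (n : ℝ) ^ (-(2 : ℝ)) := by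
      apply Real.rpow_le_rpow_of_exponent_le hn1
      simp only [Complex.sub_re, Complex.neg_re, Complex.one_re]
      linarith
    have h4 : (n : ℝ) ^ (-(2 : ℝ)) = ((n : ℝ) ^ 2)⁻¹ := by
      rw [Real.rpow_neg (by linarith), show ((2:ℝ)) = ((2:ℕ):ℝ) by norm_num,
        Real.rpow_natCast]
    rw [h1]
    exact mul_le_mul_of_nonneg_left (h2.trans (h3.trans h4.le)) (norm_nonneg _)
  have key := Convex.norm_image_sub_le_of_norm_hasDerivWithin_le (f := fun x : ℝ => ((x : ℂ)) ^ (-s)) (f' := fun x : ℝ => -s * (x : ℂ) ^ (-s - 1)) hderiv hbound (convex_Icc _ _) (Set.left_mem_Icc.mpr (by linarith)) (Set.right_mem_Icc.mpr (by linarith))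
  simpa using key

set_option maxHeartbeats 1000000 in
lemma aux_main {r : ℕ} [NeZero r] (χ : DirichletCharacter ℂ r) (hχ : χ ≠ 1)
    {σ : ℝ} (t : ℝ) (hσ : 1 < σ) :
    ‖DirichletCharacter.LFunction χ ((σ : ℂ) + (t : ℂ) * Complex.I)‖ ≤
      10 * Real.log ((r : ℝ) * (|t| + 2)) := by
  have hr0 : 0 < r := Nat.pos_of_ne_zero (NeZero.ne r)
  have hr1 : (1 : ℝ) ≤ (r : ℝ) := by exact_mod_cast hr0
  have habs : (0:ℝ) ≤ |t| := abs_nonneg t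
  have harg2 : (2:ℝ) ≤ (r : ℝ) * (|t| + 2) := by nlinarith
  have hL0 : Real.log 2 ≤ Real.log ((r : ℝ) * (|t| + 2)) :=
    Real.log_le_log (by norm_num) harg2
  have hlog2 : (0.6931471803 : ℝ) < Real.log 2 := Real.log_two_gt_d9
  set s : ℂ := (σ : ℂ) + (t : ℂ) * Complex.I with hs
  have hs_re : s.re = σ := by simp [hs]
  have hs_re1 : 1 < s.re := by rw [hs_re]; exact hσ
  have hs_norm : ‖s‖ ≤ |σ| + |t| := by
    calc ‖s‖ ≤ ‖(σ : ℂ)‖ + ‖(t : ℂ) * Complex.I‖ := norm_add_le _ _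
      _ = |σ| + |t| := by simp
  rw [DirichletCharacter.LFunction_eq_LSeries χ hs_re1]
  rcases le_or_gt 2 σ with hσ2 | hσ2
  · -- easy region: absolutely bounded by ζ(2)
    have hmaj : ∀ n : ℕ, ‖LSeries.term (χ ·) s n‖ ≤ 1 / (n : ℝ) ^ 2 := by
      intro n
      rw [LSeries.norm_term_eq]
      rcases eq_or_ne n 0 with rfl | hn
      · simp
      · rw [if_neg hn]
        have hn1 : (1:ℝ) ≤ (n : ℝ) := by exact_mod_cast Nat.one_le_iff_ne_zero.mpr hn
        have h2 : ((n:ℝ)) ^ 2 ≤ (n:ℝ) ^ s.re := by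
          rw [show ((n:ℝ)) ^ 2 = (n:ℝ) ^ ((2:ℕ):ℝ) by rw [Real.rpow_natCast]]
          refine Real.rpow_le_rpow_of_exponent_le hn1 ?_
          rw [hs_re]; push_cast; linarith
        exact div_le_div₀ (by norm_num) (χ.norm_le_one _) (by positivity) h2
    have hsum2 : Summable (fun n : ℕ => 1 / (n : ℝ) ^ 2) := hasSum_zeta_two.summable
    have hsummable : Summable (fun n => ‖LSeries.term (χ ·) s n‖) :=
      Summable.of_nonneg_of_le (fun _ => norm_nonneg _) hmaj hsum2
    calc ‖LSeries (χ ·) s‖ ≤ ∑' n, ‖LSeries.term (χ ·) s n‖ :=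
          norm_tsum_le_tsum_norm hsummable
      _ ≤ ∑' n : ℕ, 1 / (n : ℝ) ^ 2 := hsummable.tsum_le_tsum hmaj hsum2
      _ = Real.pi ^ 2 / 6 := hasSum_zeta_two.tsum_eq
      _ ≤ 3 := by nlinarith [Real.pi_le_four, Real.pi_pos]
      _ ≤ 10 * Real.log ((r : ℝ) * (|t| + 2)) := by linarith
  · -- main region 1 < σ < 2
    set N : ℕ := r * (Nat.floor |t| + 3) with hN
    have hN1 : 1 ≤ N := by
      have : 1 * 1 ≤ r * (Nat.floor |t| + 3) := Nat.mul_le_mul hr0 (by omega)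
      simpa using this
    have hN0 : (0:ℝ) < (N:ℝ) := by exact_mod_cast hN1
    have hNr : (r : ℝ) * (|t| + 2) ≤ (N : ℝ) := by
      have h1 : |t| + 2 ≤ (Nat.floor |t| : ℝ) + 3 := by
        have := Nat.lt_floor_add_one |t|
        linarith
      calc (r : ℝ) * (|t| + 2) ≤ (r : ℝ) * ((Nat.floor |t| : ℝ) + 3) := by nlinarith
        _ = (N : ℝ) := by rw [hN]; push_cast; ring
    have hNle : (N : ℝ) ≤ (r : ℝ) * (|t| + 3) := by
      have h1 : (Nat.floor |t| : ℝ) ≤ |t| := Nat.floor_le habs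
      calc (N : ℝ) = (r : ℝ) * ((Nat.floor |t| : ℝ) + 3) := by rw [hN]; push_cast; ring
        _ ≤ (r : ℝ) * (|t| + 3) := by nlinarith
    have hsummable : Summable (LSeries.term (χ ·) s) :=
      DirichletCharacter.LSeriesSummable_of_one_lt_re χ hs_re1
    have htsum : HasSum (LSeries.term (χ ·) s) (LSeries (χ ·) s) := hsummable.hasSum
    set head : ℂ := ∑ i ∈ range (N + 1), LSeries.term (χ ·) s i with hhead
    -- head bound
    have hhead_bound : ‖head‖ ≤ 1 + Real.log N := by
      have h1 : ∀ i ∈ range (N + 1), ‖LSeries.term (χ ·) s i‖ ≤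
          if i = 0 then 0 else (i : ℝ)⁻¹ := by
        intro i _
        rw [LSeries.norm_term_eq]
        rcases eq_or_ne i 0 with rfl | hi
        · simp
        · rw [if_neg hi, if_neg hi]
          have hi1 : (1:ℝ) ≤ (i : ℝ) := by exact_mod_cast Nat.one_le_iff_ne_zero.mpr hi
          have h2 : (i:ℝ) ≤ (i:ℝ) ^ s.re := by
            calc (i:ℝ) = (i:ℝ) ^ (1:ℝ) := (Real.rpow_one _).symm
              _ ≤ (i:ℝ) ^ s.re := Real.rpow_le_rpow_of_exponent_le hi1 (by rw [hs_re]; linarith)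
          calc ‖χ (i : ZMod r)‖ / (i:ℝ) ^ s.re ≤ 1 / (i:ℝ) :=
                div_le_div₀ (by norm_num) (χ.norm_le_one _) (by linarith) h2
            _ = (i : ℝ)⁻¹ := one_div _
      have h2 : ∑ i ∈ range (N + 1), (if i = 0 then (0:ℝ) else (i : ℝ)⁻¹)
          = (harmonic N : ℝ) := by
        rw [Finset.sum_range_succ']
        simp only [if_neg (Nat.succ_ne_zero _), if_pos rfl, add_zero]
        rw [harmonic, Rat.cast_sum]
        push_cast
        simp
      calc ‖head‖ ≤ ∑ i ∈ range (N + 1), ‖LSeries.term (χ ·) s i‖ := norm_sum_le _ _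
        _ ≤ ∑ i ∈ range (N + 1), (if i = 0 then (0:ℝ) else (i : ℝ)⁻¹) :=
            Finset.sum_le_sum h1
        _ = (harmonic N : ℝ) := h2
        _ ≤ 1 + Real.log N := harmonic_le_one_add_log N
    -- tail bound
    set F : ℕ → ℂ := fun i => ((i : ℕ) : ℂ) ^ (-s) with hF
    have hFnorm : ∀ i : ℕ, 1 ≤ i → ‖F i‖ = (i : ℝ) ^ (-s.re) := by
      intro i hi
      rw [hF]
      simp only
      rw [Complex.norm_natCast_cpow_of_pos (by omega), Complex.neg_re]
    have hterm_eq : ∀ i : ℕ, i ≠ 0 → LSeries.term (χ ·) s i = F i • (χ (i : ZMod r)) := by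
      intro i hi
      rw [LSeries.term_of_ne_zero hi, smul_eq_mul, hF]
      simp only
      rw [Complex.cpow_neg, div_eq_mul_inv, mul_comm]
    have hbd : ∀ᶠ M in atTop, ‖∑ i ∈ Ioc N M, LSeries.term (χ ·) s i‖ ≤
        (M : ℝ) ^ (-s.re) * r + ((1 + ‖s‖) * r * (N : ℝ)⁻¹) := by
      filter_upwards [eventually_ge_atTop (N + 1)] with M hM
      have hNM : N < M := by omega
      have hsum_eq : ∑ i ∈ Ioc N M, LSeries.term (χ ·) s i
          = ∑ i ∈ Ioc N M, F i • (χ (i : ZMod r)) := by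
        refine Finset.sum_congr rfl fun i hi => hterm_eq i ?_
        have := (Finset.mem_Ioc.mp hi).1
        omega
      rw [hsum_eq, Finset.sum_Ioc_by_parts F (fun i => χ (i : ZMod r)) hNM]
      have hA : ∀ k : ℕ, ‖∑ i ∈ range k, χ (i : ZMod r)‖ ≤ r := aux_charSum_bound χ hχ
      have hb1 : ‖F M • ∑ i ∈ range (M + 1), χ (i : ZMod r)‖ ≤ (M : ℝ) ^ (-s.re) * r := by
        rw [smul_eq_mul, norm_mul, hFnorm M (by omega)]
        exact mul_le_mul_of_nonneg_left (hA _) (Real.rpow_nonneg (by positivity) _)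
      have hb2 : ‖F (N + 1) • ∑ i ∈ range (N + 1), χ (i : ZMod r)‖ ≤ (N : ℝ)⁻¹ * r := by
        rw [smul_eq_mul, norm_mul, hFnorm (N + 1) (by omega)]
        have h1 : ((N : ℝ) + 1) ^ (-s.re) ≤ (N : ℝ)⁻¹ := by
          calc ((N:ℝ) + 1) ^ (-s.re) ≤ ((N:ℝ) + 1) ^ (-(1:ℝ)) :=
                Real.rpow_le_rpow_of_exponent_le (by linarith) (by rw [hs_re]; linarith)
            _ = ((N:ℝ) + 1)⁻¹ := by rw [Real.rpow_neg_one]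
            _ ≤ (N : ℝ)⁻¹ := by
                rw [inv_le_inv₀ (by linarith) hN0]; linarith
        have h2 : ((N + 1 : ℕ) : ℝ) ^ (-s.re) ≤ (N : ℝ)⁻¹ := by push_cast; exact h1
        exact mul_le_mul h2 (hA _) (norm_nonneg _) (by positivity)
      have hb3 : ‖∑ i ∈ Ioc N (M - 1), (F (i + 1) - F i) • ∑ j ∈ range (i + 1), χ (j : ZMod r)‖
          ≤ ‖s‖ * (N : ℝ)⁻¹ * r := by
        calc ‖∑ i ∈ Ioc N (M - 1), (F (i + 1) - F i) • ∑ j ∈ range (i + 1), χ (j : ZMod r)‖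
            ≤ ∑ i ∈ Ioc N (M - 1), ‖(F (i + 1) - F i) • ∑ j ∈ range (i + 1), χ (j : ZMod r)‖ :=
              norm_sum_le _ _
          _ ≤ ∑ i ∈ Ioc N (M - 1), (‖s‖ * ((i : ℝ) ^ 2)⁻¹) * r := by
              refine Finset.sum_le_sum fun i hi => ?_
              have hi1 : 1 ≤ i := by
                have := (Finset.mem_Ioc.mp hi).1; omega
              rw [smul_eq_mul, norm_mul]
              refine mul_le_mul (aux_cpow_diff_bound (le_of_lt hs_re1) hi1) (hA _)
                (norm_nonneg _) (by positivity)
          _ = (‖s‖ * r) * ∑ i ∈ Ioc N (M - 1), ((i : ℝ) ^ 2)⁻¹ := by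
              rw [Finset.mul_sum]; exact Finset.sum_congr rfl fun i _ => by ring
          _ ≤ (‖s‖ * r) * (N : ℝ)⁻¹ := by
              refine mul_le_mul_of_nonneg_left ?_ (by positivity)
              rcases le_or_gt N (M - 1) with h | h
              · calc ∑ i ∈ Ioc N (M - 1), ((i : ℝ) ^ 2)⁻¹ ≤ (N:ℝ)⁻¹ - ((M - 1 : ℕ):ℝ)⁻¹ :=
                      sum_Ioc_inv_sq_le_sub (by omega) h
                  _ ≤ (N : ℝ)⁻¹ := by
                      have : (0:ℝ) ≤ ((M - 1 : ℕ):ℝ)⁻¹ := by positivity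
                      linarith
              · rw [Finset.Ioc_eq_empty (by omega), Finset.sum_empty]
                positivity
          _ = ‖s‖ * (N : ℝ)⁻¹ * r := by ring
      refine le_trans (norm_sub_le _ _) ?_
      refine le_trans (add_le_add (norm_sub_le _ _) le_rfl) ?_
      refine le_trans (add_le_add (add_le_add hb1 hb2) hb3) (le_of_eq (by ring))
    have htail_t : Tendsto (fun M => ∑ i ∈ Ioc N M, LSeries.term (χ ·) s i) atTop
        (𝓝 (LSeries (χ ·) s - head)) := by
      have h1 : Tendsto (fun M : ℕ => ∑ i ∈ range (M + 1), LSeries.term (χ ·) s i) atTop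
          (𝓝 (LSeries (χ ·) s)) := htsum.tendsto_sum_nat.comp (tendsto_add_atTop_nat 1)
      have h2 : Tendsto (fun M : ℕ => ∑ i ∈ range (M + 1), LSeries.term (χ ·) s i - head)
          atTop (𝓝 (LSeries (χ ·) s - head)) := h1.sub_const _
      refine h2.congr' ?_
      filter_upwards [eventually_ge_atTop N] with M hM
      have hsplit : ∑ i ∈ range (N + 1), LSeries.term (χ ·) s i
          + ∑ i ∈ Ioc N M, LSeries.term (χ ·) s i
          = ∑ i ∈ range (M + 1), LSeries.term (χ ·) s i := by
        rw [range_eq_Ico, range_eq_Ico, ← Finset.Ico_add_one_add_one_eq_Ioc]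
        exact Finset.sum_Ico_consecutive _ (m := 0) (n := N + 1) (k := M + 1) (by omega) (by omega)
      rw [hhead, ← hsplit]
      ring
    have hlim : Tendsto (fun M : ℕ => (M : ℝ) ^ (-s.re) * r + ((1 + ‖s‖) * r * (N : ℝ)⁻¹))
        atTop (𝓝 (0 * r + ((1 + ‖s‖) * r * (N : ℝ)⁻¹))) := by
      refine Tendsto.add_const _ (Tendsto.mul_const _ ?_)
      exact (tendsto_rpow_neg_atTop (by linarith)).comp tendsto_natCast_atTop_atTop
    have htail : ‖LSeries (χ ·) s - head‖ ≤ 0 * r + ((1 + ‖s‖) * r * (N : ℝ)⁻¹) :=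
      le_of_tendsto_of_tendsto htail_t.norm hlim hbd
    have htail2 : ‖LSeries (χ ·) s - head‖ ≤ 2 := by
      have h1 : ‖s‖ ≤ 2 + |t| := by
        have : |σ| = σ := abs_of_pos (by linarith)
        rw [this] at hs_norm; linarith
      have h2 : (1 + ‖s‖) * r ≤ 2 * N := by
        have : (1 + ‖s‖) * r ≤ (3 + |t|) * r := by nlinarith [norm_nonneg s]
        calc (1 + ‖s‖) * r ≤ (3 + |t|) * r := this
          _ ≤ 2 * ((r:ℝ) * (|t| + 2)) := by nlinarith
          _ ≤ 2 * N := by linarith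
      calc ‖LSeries (χ ·) s - head‖ ≤ 0 * r + ((1 + ‖s‖) * r * (N : ℝ)⁻¹) := htail
        _ = ((1 + ‖s‖) * r) * (N : ℝ)⁻¹ := by ring
        _ ≤ (2 * N) * (N : ℝ)⁻¹ := by
            refine mul_le_mul_of_nonneg_right h2 (by positivity)
        _ = 2 := by field_simp
    have hlogN : Real.log N ≤ Real.log 2 + Real.log ((r : ℝ) * (|t| + 2)) := by
      calc Real.log N ≤ Real.log (2 * ((r : ℝ) * (|t| + 2))) := by
            refine Real.log_le_log hN0 ?_
            nlinarith
        _ = Real.log 2 + Real.log ((r : ℝ) * (|t| + 2)) :=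
            Real.log_mul (by norm_num) (by nlinarith)
    calc ‖LSeries (χ ·) s‖ = ‖head + (LSeries (χ ·) s - head)‖ := by ring_nf
      _ ≤ ‖head‖ + ‖LSeries (χ ·) s - head‖ := norm_add_le _ _
      _ ≤ (1 + Real.log N) + 2 := add_le_add hhead_bound htail2
      _ ≤ 3 + Real.log 2 + Real.log ((r : ℝ) * (|t| + 2)) := by linarith
      _ ≤ 10 * Real.log ((r : ℝ) * (|t| + 2)) := by linarith

theorem LFunction_bound_re_ge_one :
    ∃ C : ℝ, 0 < C ∧
      ∀ (r : ℕ) [NeZero r] (χ : DirichletCharacter ℂ r), χ ≠ 1 →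
        ∀ σ t : ℝ, 1 ≤ σ →
          ‖DirichletCharacter.LFunction χ (σ + t * Complex.I)‖ ≤
            C * Real.log ((r : ℝ) * (|t| + 2)) := by
  refine ⟨10, by norm_num, ?_⟩
  intro r _ χ hχ σ t hσ
  rcases hσ.eq_or_lt with rfl | hσ'
  · have hc : Continuous (fun x : ℝ =>
        ‖DirichletCharacter.LFunction χ ((x : ℂ) + (t : ℂ) * Complex.I)‖) := by
      have h1 : Continuous (DirichletCharacter.LFunction χ) :=
        (DirichletCharacter.differentiable_LFunction hχ).continuous
      exact (h1.comp (by continuity)).norm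
    have hcont : ContinuousWithinAt (fun x : ℝ =>
        ‖DirichletCharacter.LFunction χ ((x : ℂ) + (t : ℂ) * Complex.I)‖) (Set.Ioi 1) 1 :=
      hc.continuousWithinAt
    refine le_of_tendsto hcont ?_
    filter_upwards [self_mem_nhdsWithin] with x hx
    exact aux_main χ hχ t hx
  · exact aux_main χ hχ t hσ'
end

section
/- For every sufficiently small ε > 0 there exists y₁(ε) such that for all real y ≥ y₁(ε) the following holds: if A(y) = max_{n ≤ y} a(n) and y₀ is the smallest positive integer with y₀ ≤ y and a(y₀) = A(y), then y₀ > y^{1−ε}. -/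
def P (n : ℕ) : ℕ := Fintype.card (Nat.Partition n)

/-- adding two parts of size 1 -/
def addOnes {n : ℕ} (p : Nat.Partition n) : Nat.Partition (n + 2) where
  parts := 1 ::ₘ 1 ::ₘ p.parts
  parts_pos := by
    intro i hi
    rcases Multiset.mem_cons.1 hi with h | h
    · omega
    rcases Multiset.mem_cons.1 h with h | h
    · omega
    · exact p.parts_pos h
  parts_sum := by simp [p.parts_sum]; omega

lemma addOnes_inj {n : ℕ} : Function.Injective (addOnes (n := n)) := by
  intro p q h
  ext1
  have : (1 ::ₘ 1 ::ₘ p.parts) = 1 ::ₘ 1 ::ₘ q.parts := congrArg Nat.Partition.parts h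
  rwa [Multiset.cons_inj_right, Multiset.cons_inj_right] at this

lemma P_lt (n : ℕ) : P n < P (n + 2) := by
  apply Fintype.card_lt_of_injective_of_notMem addOnes addOnes_inj
    (b := Nat.Partition.indiscrete (n+2))
  intro ⟨p, hp⟩
  have h1 : (1:ℕ) ∈ (Nat.Partition.indiscrete (n+2)).parts := by
    rw [← hp]; simp [addOnes]
  rw [Nat.Partition.indiscrete_parts (by omega)] at h1
  simp at h1

lemma abelianCount_pos (n : ℕ) : 0 < abelianCount n := by
  unfold abelianCount
  rw [Finsupp.prod]
  exact Finset.prod_pos fun p hp => Fintype.card_pos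

lemma abelianCount_two_pow_mul {k n : ℕ} (hn : ¬ 2 ∣ n) :
    abelianCount (2 ^ k * n) = P k * abelianCount n := by
  have hn0 : n ≠ 0 := by rintro rfl; exact hn (dvd_zero 2)
  unfold abelianCount
  rw [Nat.factorization_mul (pow_ne_zero k two_ne_zero) hn0,
    Nat.Prime.factorization_pow Nat.prime_two]
  have hd : Disjoint (Finsupp.single 2 k).support n.factorization.support := by
    rw [Finset.disjoint_left]
    intro p hp hp2
    have : p = 2 := by
      by_contra h
      simp [Finsupp.mem_support_iff, Finsupp.single_apply_eq_zero] at hp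
      omega
    subst this
    rw [Nat.support_factorization, Nat.mem_primeFactors] at hp2
    exact hn hp2.2.1
  rw [Finsupp.prod_add_index_of_disjoint hd]
  congr 1
  rw [Finsupp.prod_single_index]
  · rfl
  · show Fintype.card (Nat.Partition 0) = 1
    decide

lemma abelianCount_four_mul {m : ℕ} (hm : 0 < m) :
    abelianCount m < abelianCount (4 * m) := by
  obtain ⟨k, n, hn, rfl⟩ : ∃ k n, ¬ 2 ∣ n ∧ m = 2 ^ k * n :=
    ⟨m.factorization 2, m / 2 ^ m.factorization 2,
      Nat.not_dvd_ordCompl Nat.prime_two hm.ne',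
      (Nat.ordProj_mul_ordCompl_eq_self m 2).symm⟩
  have h4 : 4 * (2 ^ k * n) = 2 ^ (k + 2) * n := by ring
  rw [h4, abelianCount_two_pow_mul hn, abelianCount_two_pow_mul hn]
  exact (Nat.mul_lt_mul_right (abelianCount_pos n)).2 (P_lt k)

theorem argmax_abelianCount_large :
    ∃ ε₀ : ℝ, 0 < ε₀ ∧
      ∀ ε : ℝ, 0 < ε → ε < ε₀ → ∃ y₁ : ℝ,
        ∀ y : ℝ, y₁ ≤ y →
          ∀ y₀ : ℕ, 0 < y₀ → (y₀ : ℝ) ≤ y →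
            abelianCount y₀ = (Finset.Icc 1 ⌊y⌋₊).sup abelianCount →
            (∀ m : ℕ, 0 < m → (m : ℝ) ≤ y →
              abelianCount m = (Finset.Icc 1 ⌊y⌋₊).sup abelianCount → y₀ ≤ m) →
            (y₀ : ℝ) > y ^ (1 - ε) := by
  refine ⟨1, one_pos, fun ε hε hε1 => ⟨(4:ℝ) ^ (1/ε), fun y hy y₀ hy₀ hy₀y hsup _ => ?_⟩⟩
  have hε0 : ε ≠ 0 := hε.ne'
  have h4 : (4:ℝ) ≤ (4:ℝ) ^ (1/ε) := by
    calc (4:ℝ) = (4:ℝ) ^ (1:ℝ) := by norm_num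
    _ ≤ (4:ℝ) ^ (1/ε) := Real.rpow_le_rpow_of_exponent_le (by norm_num)
        (by rw [le_div_iff₀ hε]; linarith)
  have hy4 : (4:ℝ) ≤ y := le_trans h4 hy
  have hypos : (0:ℝ) < y := by linarith
  -- key claim: y < 4 * y₀
  have hkey : y < 4 * (y₀ : ℝ) := by
    by_contra hc
    push_neg at hc
    have hmem : 4 * y₀ ∈ Finset.Icc 1 ⌊y⌋₊ := by
      rw [Finset.mem_Icc]
      constructor
      · omega
      · exact Nat.le_floor (by push_cast; linarith)
    have hle : abelianCount (4 * y₀) ≤ (Finset.Icc 1 ⌊y⌋₊).sup abelianCount :=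
      Finset.le_sup hmem
    rw [← hsup] at hle
    exact absurd hle (not_le.2 (abelianCount_four_mul hy₀))
  -- y ^ ε ≥ 4
  have hyε : (4:ℝ) ≤ y ^ ε := by
    calc (4:ℝ) = ((4:ℝ) ^ (1/ε)) ^ ε := by
          rw [← Real.rpow_mul (by norm_num : (0:ℝ) ≤ 4), one_div_mul_cancel hε0,
            Real.rpow_one]
    _ ≤ y ^ ε := Real.rpow_le_rpow (by positivity) hy hε.le
  have : y ^ (1 - ε) = y / y ^ ε := by
    rw [Real.rpow_sub hypos, Real.rpow_one]
  rw [this]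
  calc y / y ^ ε ≤ y / 4 := by
        gcongr
  _ < y₀ := by linarith
end
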